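/- (Estimate for T₀ in the proof of Theorem 4.2) Let (X, d, μ) be a complete metric measure space, Ω ⊂ X a bounded domain such that μ is doubling on Ω, ℋ a σ-finite Borel regular measure on ∂Ω that is upper codimension-θ regular for some θ > 0, Φ an N-function satisfying the Δ'-condition, and V a Banach space. Set R = 2 diam(Ω) and, for u ∈ L^Φ(Ω, V), let T₀u : ∂Ω → V be the constant map T₀u(x) = ⨍_Ω u dμ. Then there is a constant c₁, independent of u, such that ‖T₀u‖_{L^Φ(∂Ω, V, ℋ)} ≤ c₁ Φ⁻¹(R^θ)^{-1} ‖u‖_{L^Φ(Ω, V)}. -/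

import Mathlib

/-!
Let `P = Φ⁻¹ (R ^ θ)`. If `∫_Ω Φ (‖u‖ / k) ≤ 1`, Jensen's inequality for the convex map
`v ↦ Φ (‖v‖ / k)` gives `Φ (‖⨍ u‖ / k) ≤ 1 / μ Ω`. The Δ'-condition moves the factor `P` inside `Φ`:
`Φ (‖⨍ u‖ P / (c k)) ≤ (C' / c) Φ (‖⨍ u‖ / k) Φ P`, and upper codimension-`θ` regularity at the
radius `R > diam Ω`, where the ball contains all of `∂Ω`, gives `Φ P · ℋ (∂Ω) ≤ C₀ μ Ω`.
So `c P⁻¹ k` is admissible for the Luxemburg norm of the constant `‖⨍ u‖` on `∂Ω` when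
`c = max (C' C₀) 1`.
This needs `R > 0`; if instead `Ω` has at most one point, then, being open, it has empty
boundary and the left-hand side vanishes.
-/

open MeasureTheory Metric Set Filter Topology

noncomputable section

/-- An N-function: a continuous convex function on `[0,∞)` vanishing only at `0`,
with `Φ(x)/x → 0` as `x → 0⁺` and `Φ(x)/x → ∞` as `x → ∞`. -/
structure IsNFunction (Φ : ℝ → ℝ) : Prop where
  continuous : Continuous Φ
  convexOn : ConvexOn ℝ (Set.Ici (0:ℝ)) Φ
  map_zero : Φ 0 = 0
  pos : ∀ x : ℝ, 0 < x → 0 < Φ x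
  tendsto_zero : Filter.Tendsto (fun x => Φ x / x) (nhdsWithin 0 (Set.Ioi 0)) (nhds 0)
  tendsto_atTop : Filter.Tendsto (fun x => Φ x / x) Filter.atTop Filter.atTop

/-- The Δ'-condition with constant `C'`. -/
def HasDeltaPrime (Φ : ℝ → ℝ) (C' : ℝ) : Prop :=
  0 < C' ∧ ∀ x y : ℝ, 0 ≤ x → 0 ≤ y → Φ (x * y) ≤ C' * Φ x * Φ y

/-- The Δ'-condition. -/
def DeltaPrime (Φ : ℝ → ℝ) : Prop := ∃ C' : ℝ, HasDeltaPrime Φ C'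

/-- The ∇₂-condition. -/
def Nabla2 (Φ : ℝ → ℝ) : Prop :=
  ∃ C : ℝ, 1 < C ∧ ∀ x : ℝ, 0 ≤ x → Φ x ≤ (1 / (2 * C)) * Φ (C * x)

/-- The doubling (Δ₂) condition for a Young function. -/
def DoublingFn (Φ : ℝ → ℝ) : Prop :=
  ∃ C₂ : ℝ, 0 < C₂ ∧ ∀ x : ℝ, 0 ≤ x → Φ (2 * x) ≤ C₂ * Φ x

/-- Generalized inverse of an increasing function `Φ` on `[0,∞)`. -/
def PhiInv (Φ : ℝ → ℝ) (s : ℝ) : ℝ := sInf {t : ℝ | 0 ≤ t ∧ s ≤ Φ t}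

/-- The complementary Young function `Ψ(y) = sup {xy − Φ(x) : x ≥ 0}`. -/
def YoungConjugate (Φ : ℝ → ℝ) (y : ℝ) : ℝ :=
  sSup {z : ℝ | ∃ x : ℝ, 0 ≤ x ∧ z = x * y - Φ x}

/-- `H` is essentially weaker than `G` (`H ≺≺ G`). -/
def EssWeaker (H G : ℝ → ℝ) : Prop :=
  ∀ a : ℝ, 0 < a → ∃ x₀ : ℝ, 0 ≤ x₀ ∧ ∀ x : ℝ, x₀ ≤ x → H x ≤ G (a * x)

section MeasureDefs

variable {α : Type*} [MeasurableSpace α]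

/-- The Luxemburg norm of a real-valued function. -/
def luxNorm (Φ : ℝ → ℝ) (μ : Measure α) (f : α → ℝ) : ℝ :=
  sInf {k : ℝ | 0 < k ∧ ∫⁻ x, ENNReal.ofReal (Φ (|f x| / k)) ∂μ ≤ 1}

/-- Membership in the Orlicz space `L^Φ`. -/
def MemLPhi (Φ : ℝ → ℝ) (μ : Measure α) (f : α → ℝ) : Prop :=
  ∃ k : ℝ, 0 < k ∧ ∫⁻ x, ENNReal.ofReal (Φ (|f x| / k)) ∂μ ≤ 1

end MeasureDefs

section MetricDefs

variable {X : Type*} [PseudoMetricSpace X] [MeasurableSpace X]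

/-- `u ∈ L^Φ(Ω, Z)`: `u` is a.e. strongly measurable (in particular essentially
separably valued) and `dist(u ·, z₀) ∈ L^Φ(Ω)` for some `z₀`. -/
def MemLPhiMap {Z : Type*} [PseudoMetricSpace Z] (Φ : ℝ → ℝ) (μ : Measure X) (Ω : Set X)
    (u : X → Z) : Prop :=
  AEStronglyMeasurable u (μ.restrict Ω) ∧
    ∃ z₀ : Z, MemLPhi Φ (μ.restrict Ω) (fun x => dist (u x) z₀)

/-- `g` is a Hajlasz gradient of `u` on `Ω`. -/
def IsHajlaszGradient {Z : Type*} [PseudoMetricSpace Z] (μ : Measure X) (Ω : Set X)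
    (u : X → Z) (g : X → ℝ) : Prop :=
  (∀ x, 0 ≤ g x) ∧ ∃ N : Set X, μ N = 0 ∧
    ∀ x ∈ Ω \ N, ∀ y ∈ Ω \ N, dist (u x) (u y) ≤ dist x y * (g x + g y)

/-- Membership in the Orlicz–Hajlasz–Sobolev space `M^{1,Φ}(Ω, Z)`. -/
def MemM1Phi {Z : Type*} [PseudoMetricSpace Z] (Φ : ℝ → ℝ) (μ : Measure X) (Ω : Set X)
    (u : X → Z) : Prop :=
  MemLPhiMap Φ μ Ω u ∧
    ∃ g : X → ℝ, IsHajlaszGradient μ Ω u g ∧ MemLPhi Φ (μ.restrict Ω) g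

/-- The Hajlasz energy `E_H^Φ(u)`. -/
def hajlaszEnergy {Z : Type*} [PseudoMetricSpace Z] (Φ : ℝ → ℝ) (μ : Measure X) (Ω : Set X)
    (u : X → Z) : ℝ :=
  sInf {E : ℝ | ∃ g : X → ℝ, IsHajlaszGradient μ Ω u g ∧ MemLPhi Φ (μ.restrict Ω) g ∧
    E = luxNorm Φ (μ.restrict Ω) g}

/-- `μ` is doubling on `Ω`. -/
def DoublingOn (μ : Measure X) (Ω : Set X) : Prop :=
  ∃ Cd : NNReal, 0 < Cd ∧ ∀ x ∈ closure Ω, ∀ r : ℝ, 0 < r →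
    0 < μ (ball x r ∩ Ω) ∧ μ (ball x (2 * r) ∩ Ω) ≤ (Cd : ENNReal) * μ (ball x r ∩ Ω) ∧
      μ (ball x (2 * r) ∩ Ω) < ⊤

/-- `ℋ` is upper codimension-`θ` regular on `∂Ω` (with respect to `μ`). -/
def UpperCodimReg (H μ : Measure X) (Ω : Set X) (θ : ℝ) : Prop :=
  ∃ C₀ : NNReal, 0 < C₀ ∧ ∀ x ∈ frontier Ω, ∀ r : ℝ, 0 < r →
    ENNReal.ofReal (r ^ θ) * H (ball x r ∩ frontier Ω) ≤ (C₀ : ENNReal) * μ (ball x r ∩ Ω)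

/-- The Hardy–Littlewood maximal function relative to `Ω`. -/
def maximalFn (μ : Measure X) (Ω : Set X) (g : X → ℝ) (x : X) : ℝ :=
  sSup {t : ℝ | ∃ r : ℝ, 0 < r ∧ t = ⨍ y in ball x r ∩ Ω, |g y| ∂μ}

end MetricDefs

/-- A sequence of sets `K m ⊆ Y m` is uniformly compact. -/
def UniformlyCompact {Y : ℕ → Type*} [∀ m, PseudoMetricSpace (Y m)]
    (K : ∀ m, Set (Y m)) : Prop :=
  (∃ D : ℝ, ∀ m, Metric.diam (K m) ≤ D) ∧
    ∀ ε : ℝ, 0 < ε → ∃ N : ℕ, ∀ m, ∃ S : Finset (Y m), S.card ≤ N ∧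
      K m ⊆ ⋃ y ∈ S, ball y ε

section BanachDefs

variable {X : Type*} [PseudoMetricSpace X] [MeasurableSpace X]
variable {V : Type*} [NormedAddCommGroup V] [NormedSpace ℝ V]

/-- The pair `(u, g)` satisfies the local `Φ`-Poincaré inequality on `Ω`
with constants `CP` and `lam`. -/
def LocalPhiPoincare (Φ : ℝ → ℝ) (μ : Measure X) (Ω : Set X) (u : X → V) (g : X → ℝ)
    (CP lam : ℝ) : Prop :=
  0 < CP ∧ 1 ≤ lam ∧ ∀ x ∈ closure Ω, ∀ r : ℝ, 0 < r →
    ⨍ y in ball x r ∩ Ω, ‖u y - ⨍ z in ball x r ∩ Ω, u z ∂μ‖ ∂μ ≤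
      CP * r * PhiInv Φ (⨍ z in ball x (lam * r) ∩ Ω, Φ (g z) ∂μ)

/-- The pair `(u, g)` satisfies the local `1`-Poincaré inequality on `Ω`. -/
def Local1Poincare (μ : Measure X) (Ω : Set X) (u : X → V) (g : X → ℝ)
    (CP lam : ℝ) : Prop :=
  0 < CP ∧ 1 ≤ lam ∧ ∀ x ∈ closure Ω, ∀ r : ℝ, 0 < r →
    ⨍ y in ball x r ∩ Ω, ‖u y - ⨍ z in ball x r ∩ Ω, u z ∂μ‖ ∂μ ≤
      CP * r * ⨍ z in ball x (lam * r) ∩ Ω, g z ∂μ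

/-- The dyadic boundary averages `T_k u(x) = ⨍_{B(x, 2^{-k}R)∩Ω} u dμ`. -/
def Tavg (μ : Measure X) (Ω : Set X) (R : ℝ) (u : X → V) (k : ℕ) (x : X) : V :=
  ⨍ y in ball x ((2:ℝ) ^ (-(k:ℝ)) * R) ∩ Ω, u y ∂μ

/-- `z` is the trace value of `u` at the boundary point `x`. -/
def IsTraceAt (μ : Measure X) (Ω : Set X) (u : X → V) (x : X) (z : V) : Prop :=
  Filter.Tendsto
    (fun r : ℝ =>
      (μ (ball x r ∩ Ω))⁻¹ * ∫⁻ y in ball x r ∩ Ω, ENNReal.ofReal ‖u y - z‖ ∂μ)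
    (nhdsWithin 0 (Set.Ioi 0)) (nhds 0)

/-- `T` is a trace of `u` on `∂Ω`, `ℋ`-almost everywhere. -/
def IsTrace (μ H : Measure X) (Ω : Set X) (u : X → V) (T : X → V) : Prop :=
  ∀ᵐ x ∂(H.restrict (frontier Ω)), IsTraceAt μ Ω u x (T x)

end BanachDefs

namespace IsNFunction

variable {Φ : ℝ → ℝ}

lemma nonneg (hΦ : IsNFunction Φ) {x : ℝ} (hx : 0 ≤ x) : 0 ≤ Φ x := by
  rcases hx.eq_or_lt with rfl | hx
  · exact hΦ.map_zero.ge
  · exact (hΦ.pos x hx).le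

lemma apply_mul_le (hΦ : IsNFunction Φ) {l z : ℝ} (hl₀ : 0 ≤ l) (hl₁ : l ≤ 1) (hz : 0 ≤ z) :
    Φ (l * z) ≤ l * Φ z := by
  simpa [hΦ.map_zero] using hΦ.convexOn.2 (self_mem_Ici : (0 : ℝ) ∈ Ici 0) (mem_Ici.2 hz)
    (sub_nonneg.2 hl₁) hl₀ (sub_add_cancel 1 l)

lemma strictMonoOn (hΦ : IsNFunction Φ) : StrictMonoOn Φ (Ici 0) := by
  intro t ht x _ htx
  have hx : 0 < x := (mem_Ici.1 ht).trans_lt htx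
  have hlt : t / x < 1 := (div_lt_one hx).2 htx
  calc Φ t = Φ (t / x * x) := by rw [div_mul_cancel₀ _ hx.ne']
    _ ≤ t / x * Φ x := hΦ.apply_mul_le (div_nonneg ht hx.le) hlt.le hx.le
    _ < Φ x := mul_lt_of_lt_one_left (hΦ.pos x hx) hlt

lemma monotoneOn (hΦ : IsNFunction Φ) : MonotoneOn Φ (Ici 0) :=
  hΦ.strictMonoOn.monotoneOn

lemma eventually_le_apply (hΦ : IsNFunction Φ) : ∀ᶠ z in atTop, z ≤ Φ z := by
  filter_upwards [hΦ.tendsto_atTop.eventually_ge_atTop 1, eventually_gt_atTop 0] with z h1 hz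
  rwa [le_div_iff₀ hz, one_mul] at h1

lemma tendsto_atTop_atTop (hΦ : IsNFunction Φ) : Tendsto Φ atTop atTop :=
  tendsto_atTop_mono' atTop hΦ.eventually_le_apply tendsto_id

lemma exists_le_add_apply (hΦ : IsNFunction Φ) : ∃ M : ℝ, ∀ z, 0 ≤ z → z ≤ M + Φ z := by
  obtain ⟨M, hM⟩ := hΦ.eventually_le_apply.exists_forall_of_atTop
  refine ⟨max M 0, fun z hz => ?_⟩
  rcases le_or_gt M z with h | h
  · linarith [hM z h, le_max_right M 0]
  · linarith [hΦ.nonneg hz, le_max_left M 0]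

lemma exists_apply_eq (hΦ : IsNFunction Φ) {s : ℝ} (hs : 0 ≤ s) : ∃ t, 0 ≤ t ∧ Φ t = s := by
  obtain ⟨b, hbs, hb⟩ :=
    ((hΦ.tendsto_atTop_atTop.eventually_ge_atTop s).and (eventually_ge_atTop 0)).exists
  obtain ⟨t, ht, hts⟩ := intermediate_value_Icc hb hΦ.continuous.continuousOn
    (by rw [hΦ.map_zero]; exact ⟨hs, hbs⟩)
  exact ⟨t, ht.1, hts⟩

lemma phiInv_apply (hΦ : IsNFunction Φ) {t : ℝ} (ht : 0 ≤ t) : PhiInv Φ (Φ t) = t := by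
  have hset : {x : ℝ | 0 ≤ x ∧ Φ t ≤ Φ x} = Ici t := by
    ext x
    refine ⟨fun hx => (hΦ.strictMonoOn.le_iff_le ht hx.1).1 hx.2, fun hx => ?_⟩
    have hx' : 0 ≤ x := ht.trans hx
    exact ⟨hx', hΦ.monotoneOn ht hx' hx⟩
  rw [PhiInv, hset, csInf_Ici]

lemma apply_phiInv (hΦ : IsNFunction Φ) {s : ℝ} (hs : 0 ≤ s) : Φ (PhiInv Φ s) = s := by
  obtain ⟨t, ht, rfl⟩ := hΦ.exists_apply_eq hs
  rw [hΦ.phiInv_apply ht]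

lemma phiInv_pos (hΦ : IsNFunction Φ) {s : ℝ} (hs : 0 < s) : 0 < PhiInv Φ s := by
  obtain ⟨t, ht, rfl⟩ := hΦ.exists_apply_eq hs.le
  rw [hΦ.phiInv_apply ht]
  refine ht.lt_of_ne ?_
  rintro rfl
  exact hs.ne' hΦ.map_zero

lemma convexOn_norm_div (hΦ : IsNFunction Φ) {V : Type*} [NormedAddCommGroup V]
    [NormedSpace ℝ V] {k : ℝ} (hk : 0 ≤ k) : ConvexOn ℝ univ fun v : V => Φ (‖v‖ / k) := by
  refine ⟨convex_univ, fun v _ w _ a b ha hb hab => ?_⟩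
  have hv : 0 ≤ ‖v‖ / k := by positivity
  have hw : 0 ≤ ‖w‖ / k := by positivity
  have hnorm : ‖a • v + b • w‖ ≤ a * ‖v‖ + b * ‖w‖ := by
    refine (norm_add_le _ _).trans_eq ?_
    rw [norm_smul, norm_smul, Real.norm_of_nonneg ha, Real.norm_of_nonneg hb]
  calc Φ (‖a • v + b • w‖ / k) ≤ Φ (a • (‖v‖ / k) + b • (‖w‖ / k)) := by
        refine hΦ.monotoneOn (mem_Ici.2 (by positivity)) (mem_Ici.2 (by positivity)) ?_
        refine (div_le_div_of_nonneg_right hnorm hk).trans_eq ?_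
        simp only [smul_eq_mul]
        ring
    _ ≤ a • Φ (‖v‖ / k) + b • Φ (‖w‖ / k) := hΦ.convexOn.2 hv hw ha hb hab

end IsNFunction

lemma phiInv_nonneg (Φ : ℝ → ℝ) (s : ℝ) : 0 ≤ PhiInv Φ s :=
  Real.sInf_nonneg fun _ hx => hx.1

lemma HasDeltaPrime.apply_mul_div_le {Φ : ℝ → ℝ} {C' : ℝ} (hC' : HasDeltaPrime Φ C')
    (hΦ : IsNFunction Φ) {x y c : ℝ} (hx : 0 ≤ x) (hy : 0 ≤ y) (hc : 1 ≤ c) :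
    Φ (x * y / c) ≤ C' / c * Φ x * Φ y := by
  have hc₀ : 0 < c := one_pos.trans_le hc
  calc Φ (x * y / c) = Φ (c⁻¹ * (x * y)) := by rw [div_eq_inv_mul]
    _ ≤ c⁻¹ * Φ (x * y) := hΦ.apply_mul_le (by positivity) (inv_le_one_of_one_le₀ hc) (by positivity)
    _ ≤ c⁻¹ * (C' * Φ x * Φ y) := by gcongr; exact hC'.2 x y hx hy
    _ = C' / c * Φ x * Φ y := by ring

section Luxemburg

variable {α β : Type*} [MeasurableSpace α] [MeasurableSpace β] {Φ : ℝ → ℝ}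

lemma luxNorm_nonneg (Φ : ℝ → ℝ) (μ : Measure α) (f : α → ℝ) : 0 ≤ luxNorm Φ μ f :=
  Real.sInf_nonneg fun _ hk => hk.1.le

@[simp]
lemma luxNorm_zero_measure (Φ : ℝ → ℝ) (f : α → ℝ) : luxNorm Φ (0 : Measure α) f = 0 := by
  have hset : {k : ℝ | 0 < k ∧ ∫⁻ x, ENNReal.ofReal (Φ (|f x| / k)) ∂(0 : Measure α) ≤ 1} =
      Ioi 0 := by
    ext k; simp
  rw [luxNorm, hset, csInf_Ioi]

lemma luxNorm_le_mul_of_forall {μ : Measure α} {ν : Measure β} {f : α → ℝ} {g : β → ℝ}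
    {c : ℝ} (hc : 0 < c) (hf : MemLPhi Φ μ f)
    (h : ∀ k, 0 < k → ∫⁻ x, ENNReal.ofReal (Φ (|f x| / k)) ∂μ ≤ 1 →
      ∫⁻ y, ENNReal.ofReal (Φ (|g y| / (c * k))) ∂ν ≤ 1) :
    luxNorm Φ ν g ≤ c * luxNorm Φ μ f := by
  rw [← div_le_iff₀' hc]
  refine le_csInf hf fun k ⟨hk, hfk⟩ => (div_le_iff₀' hc).2 ?_
  exact csInf_le ⟨0, fun _ hk => hk.1.le⟩ ⟨by positivity, h k hk hfk⟩

end Luxemburg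

lemma IsNFunction.apply_norm_average_div_le {Φ : ℝ → ℝ} (hΦ : IsNFunction Φ) {α : Type*}
    [MeasurableSpace α] {ν : Measure α} [IsFiniteMeasure ν] [NeZero ν] {V : Type*}
    [NormedAddCommGroup V] [NormedSpace ℝ V] [CompleteSpace V] {u : α → V} (hu : AEStronglyMeasurable u ν)
    {k : ℝ} (hk : 0 < k) (hint : ∫⁻ x, ENNReal.ofReal (Φ (‖u x‖ / k)) ∂ν ≤ 1) :
    Φ (‖⨍ x, u x ∂ν‖ / k) ≤ (ν.real univ)⁻¹ := by
  have hΦu_nonneg : ∀ x, 0 ≤ Φ (‖u x‖ / k) := fun x => hΦ.nonneg (by positivity)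
  have hΦu_meas : AEStronglyMeasurable (fun x => Φ (‖u x‖ / k)) ν :=
    hΦ.continuous.comp_aestronglyMeasurable (by fun_prop)
  have hΦu_int : Integrable (fun x => Φ (‖u x‖ / k)) ν :=
    ⟨hΦu_meas, (hasFiniteIntegral_iff_ofReal (ae_of_all _ hΦu_nonneg)).2
      (hint.trans_lt ENNReal.one_lt_top)⟩
  obtain ⟨M, hM⟩ := hΦ.exists_le_add_apply
  have hu_int : Integrable u ν := by
    refine (((integrable_const M).add hΦu_int).const_mul k).mono' hu (ae_of_all _ fun x => ?_)
    have := hM _ (by positivity : 0 ≤ ‖u x‖ / k)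
    rwa [div_le_iff₀' hk] at this
  have hJensen := (hΦ.convexOn_norm_div hk.le).map_average_le
    (hΦ.continuous.comp (continuous_norm.div_const k)).continuousOn isClosed_univ
    (ae_of_all _ fun _ => mem_univ _) hu_int hΦu_int
  refine hJensen.trans ?_
  rw [average_eq, smul_eq_mul, integral_eq_lintegral_of_nonneg_ae (ae_of_all _ hΦu_nonneg)
    hΦu_meas]
  have h1 : (∫⁻ x, ENNReal.ofReal (Φ (‖u x‖ / k)) ∂ν).toReal ≤ 1 := by
    simpa using ENNReal.toReal_mono ENNReal.one_ne_top hint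
  exact mul_le_of_le_one_right (inv_nonneg.2 measureReal_nonneg) h1

lemma IsOpen.frontier_eq_empty_of_subsingleton {X : Type*} [TopologicalSpace X] [T1Space X]
    {s : Set X} (hs : IsOpen s) (hsub : s.Subsingleton) : frontier s = ∅ := by
  rw [hs.frontier_eq, hsub.isClosed.closure_eq, sdiff_self]

section MetricMeasure

variable {X : Type*} [PseudoMetricSpace X] [MeasurableSpace X] {μ : Measure X} {Ω : Set X}

lemma DoublingOn.measure_lt_top (h : DoublingOn μ Ω) (hb : Bornology.IsBounded Ω) :
    μ Ω < ⊤ := by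
  rcases Ω.eq_empty_or_nonempty with rfl | ⟨x, hx⟩
  · simp
  obtain ⟨Cd, -, hd⟩ := h
  have hsub : Ω ⊆ ball x (2 * (diam Ω + 1)) ∩ Ω := fun y hy =>
    ⟨mem_ball.2 <| (dist_le_diam_of_mem hb hy hx).trans_lt <| by linarith [diam_nonneg (s := Ω)],
      hy⟩
  exact (measure_mono hsub).trans_lt
    (hd x (subset_closure hx) _ (by linarith [diam_nonneg (s := Ω)])).2.2

lemma DoublingOn.measure_pos (h : DoublingOn μ Ω) (hne : Ω.Nonempty) : 0 < μ Ω := by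
  obtain ⟨Cd, -, hd⟩ := h
  obtain ⟨x, hx⟩ := hne
  exact (hd x (subset_closure hx) 1 one_pos).1.trans_le (measure_mono inter_subset_right)

lemma UpperCodimReg.exists_rpow_mul_measure_frontier_le {H : Measure X} {θ : ℝ}
    (h : UpperCodimReg H μ Ω θ) (hb : Bornology.IsBounded Ω) :
    ∃ C₀ : NNReal, ∀ r, diam Ω < r →
      ENNReal.ofReal (r ^ θ) * H (frontier Ω) ≤ C₀ * μ Ω := by
  obtain ⟨C₀, -, hC₀⟩ := h
  refine ⟨C₀, fun r hr => ?_⟩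
  rcases (frontier Ω).eq_empty_or_nonempty with he | ⟨x, hx⟩
  · simp [he]
  have hsub : frontier Ω ⊆ ball x r := fun y hy => by
    refine mem_ball.2 (lt_of_le_of_lt ?_ hr)
    rw [← diam_closure]
    exact dist_le_diam_of_mem hb.closure (frontier_subset_closure hy)
      (frontier_subset_closure hx)
  calc ENNReal.ofReal (r ^ θ) * H (frontier Ω)
      = ENNReal.ofReal (r ^ θ) * H (ball x r ∩ frontier Ω) := by
        rw [inter_eq_right.2 hsub]
    _ ≤ C₀ * μ (ball x r ∩ Ω) := hC₀ x hx r (diam_nonneg.trans_lt hr)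
    _ ≤ C₀ * μ Ω := by gcongr; exact inter_subset_right

end MetricMeasure

theorem luxNorm_const_norm_average_le {α β : Type*} [MeasurableSpace α] [MeasurableSpace β]
    {Φ : ℝ → ℝ} (hΦ : IsNFunction Φ) {C' : ℝ} (hC' : HasDeltaPrime Φ C') {ν : Measure α}
    [IsFiniteMeasure ν] [NeZero ν] {η : Measure β} {C₀ : NNReal} {P : ℝ} (hP : 0 < P)
    (hη : ENNReal.ofReal (Φ P) * η univ ≤ C₀ * ν univ) {V : Type*} [NormedAddCommGroup V]
    [NormedSpace ℝ V] [CompleteSpace V] {u : α → V} (hu : AEStronglyMeasurable u ν)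
    (hmem : MemLPhi Φ ν fun x => ‖u x‖) :
    luxNorm Φ η (fun _ => ‖⨍ x, u x ∂ν‖) ≤
      max (C' * C₀) 1 * P⁻¹ * luxNorm Φ ν (fun x => ‖u x‖) := by
  set c := max (C' * C₀) 1
  have hc : 1 ≤ c := le_max_right _ _
  have hC'₀ := hC'.1
  refine luxNorm_le_mul_of_forall (by positivity) hmem fun k hk hint => ?_
  simp only [abs_norm] at hint ⊢
  set a := ‖⨍ x, u x ∂ν‖
  set m := ν.real univ
  have hm : 0 < m := measureReal_univ_pos
  have hΦa : Φ (a / (c * P⁻¹ * k)) ≤ C' / c * m⁻¹ * Φ P :=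
    calc Φ (a / (c * P⁻¹ * k)) = Φ (a / k * P / c) := by congr 1; field_simp
      _ ≤ C' / c * Φ (a / k) * Φ P := hC'.apply_mul_div_le hΦ (by positivity) hP.le hc
      _ ≤ C' / c * m⁻¹ * Φ P := by
        gcongr
        · exact hΦ.nonneg hP.le
        · exact hΦ.apply_norm_average_div_le hu hk hint
  rw [lintegral_const]
  calc ENNReal.ofReal (Φ (a / (c * P⁻¹ * k))) * η univ
      ≤ ENNReal.ofReal (C' / c * m⁻¹) * (ENNReal.ofReal (Φ P) * η univ) := by
        rw [← mul_assoc, ← ENNReal.ofReal_mul (by positivity)]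
        gcongr
    _ ≤ ENNReal.ofReal (C' / c * m⁻¹) * (C₀ * ν univ) := by gcongr
    _ = ENNReal.ofReal (C' * C₀ / c) := by
        rw [← ofReal_measureReal, ← ENNReal.ofReal_coe_nnreal, ← ENNReal.ofReal_mul (by positivity),
          ← ENNReal.ofReal_mul (by positivity)]
        congr 1
        field_simp
        exact mul_comm _ _
    _ ≤ 1 := ENNReal.ofReal_le_one.2 (div_le_one_of_le₀ (le_max_left _ _) (by positivity))

theorem T0_estimate_general
    {X : Type*} [MetricSpace X] [MeasurableSpace X]
    (μ : Measure X) (Ω : Set X)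
    (hΩopen : IsOpen Ω) (hΩbdd : Bornology.IsBounded Ω)
    (hdoub : DoublingOn μ Ω)
    (H : Measure X) (θ : ℝ)
    (hreg : UpperCodimReg H μ Ω θ)
    (Φ : ℝ → ℝ) (hΦ : IsNFunction Φ) (hPhiDelta : DeltaPrime Φ)
    {V : Type*} [NormedAddCommGroup V] [NormedSpace ℝ V] [CompleteSpace V] :
    ∃ c₁ : ℝ, 0 < c₁ ∧ ∀ u : X → V,
      AEStronglyMeasurable u (μ.restrict Ω) →
      MemLPhi Φ (μ.restrict Ω) (fun x => ‖u x‖) →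
      luxNorm Φ (H.restrict (frontier Ω)) (fun _ => ‖⨍ y in Ω, u y ∂μ‖) ≤
        c₁ * (PhiInv Φ ((2 * Metric.diam Ω) ^ θ))⁻¹ *
          luxNorm Φ (μ.restrict Ω) (fun x => ‖u x‖) := by
  obtain ⟨C', hC'⟩ := hPhiDelta
  obtain ⟨C₀, hC₀⟩ := hreg.exists_rpow_mul_measure_frontier_le hΩbdd
  refine ⟨max (C' * C₀) 1, lt_max_of_lt_right one_pos, fun u hu hmem => ?_⟩
  rcases Ω.subsingleton_or_nontrivial with hsub | hnt
  · rw [hΩopen.frontier_eq_empty_of_subsingleton hsub, Measure.restrict_empty,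
      luxNorm_zero_measure]
    exact mul_nonneg (mul_nonneg (by positivity) (inv_nonneg.2 (phiInv_nonneg _ _)))
      (luxNorm_nonneg _ _ _)
  have hdiam : 0 < diam Ω := diam_pos hnt hΩbdd
  have : IsFiniteMeasure (μ.restrict Ω) :=
    isFiniteMeasure_restrict.2 (hdoub.measure_lt_top hΩbdd).ne
  have : NeZero (μ.restrict Ω) :=
    ⟨by simpa [Measure.restrict_eq_zero] using (hdoub.measure_pos hnt.nonempty).ne'⟩
  have hR : 0 < (2 * diam Ω) ^ θ := by positivity
  refine luxNorm_const_norm_average_le hΦ hC' (hΦ.phiInv_pos hR) ?_ hu hmem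
  rw [hΦ.apply_phiInv hR.le, Measure.restrict_apply_univ, Measure.restrict_apply_univ]
  exact hC₀ _ (by linarith)

/-- **Estimate for `T₀` in the proof of Theorem 4.2**: the constant boundary map given by
the mean of `u` over `Ω` is bounded in `L^Φ(∂Ω, V, ℋ)` by
`c₁ Φ⁻¹(R^θ)⁻¹ ‖u‖_{L^Φ(Ω,V)}`, where `R = 2 diam Ω`. -/
theorem T0_estimate
    {X : Type*} [MetricSpace X] [CompleteSpace X] [MeasurableSpace X]
    (μ : Measure X) (Ω : Set X)
    (hΩopen : IsOpen Ω) (hΩconn : IsConnected Ω) (hΩbdd : Bornology.IsBounded Ω)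
    (hdoub : DoublingOn μ Ω)
    (H : Measure X) [SigmaFinite H] (θ : ℝ) (hθ : 0 < θ)
    (hreg : UpperCodimReg H μ Ω θ)
    (Φ : ℝ → ℝ) (hΦ : IsNFunction Φ) (hPhiDelta : DeltaPrime Φ)
    {V : Type*} [NormedAddCommGroup V] [NormedSpace ℝ V] [CompleteSpace V] :
    ∃ c₁ : ℝ, 0 < c₁ ∧ ∀ u : X → V,
      AEStronglyMeasurable u (μ.restrict Ω) →
      MemLPhi Φ (μ.restrict Ω) (fun x => ‖u x‖) →
      luxNorm Φ (H.restrict (frontier Ω)) (fun _ => ‖⨍ y in Ω, u y ∂μ‖) ≤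
        c₁ * (PhiInv Φ ((2 * Metric.diam Ω) ^ θ))⁻¹ *
          luxNorm Φ (μ.restrict Ω) (fun x => ‖u x‖) :=
  T0_estimate_general μ Ω hΩopen hΩbdd hdoub H θ hreg Φ hΦ hPhiDelta
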